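/- arXiv:2408.13511 — 3 statements merged into one kernel-verified Lean document; each statement's English description precedes it below -/
import Mathlib

section
/- Under Assumption 1, for every u ∈ H¹(Ω) and every β > λ_k − λ_1: (a) ‖P⊥u‖²_{L²(Ω)} ≤ (L_k(u) − λ_k)/min{β + λ_1 − λ_k, λ_{k'} − λ_k} · ‖u‖²_{L²(Ω)}, and (b) ‖∇(P⊥u)‖²_{L²(Ω)} ≤ (L_k(u) − λ_k) · ((λ_k − V_min)/min{β + λ_1 − λ_k, λ_{k'} − λ_k} + 1) · ‖u‖²_{L²(Ω)}. -/
open MeasureTheory Real Set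
open scoped RealInnerProductSpace

noncomputable section

abbrev Pt (d : ℕ) := EuclideanSpace ℝ (Fin d)

/-- The open unit hypercube `Ω = (0,1)^d`. -/
def cube (d : ℕ) : Set (Pt d) := {x | ∀ i, x i ∈ Set.Ioo (0 : ℝ) 1}

/-- Lebesgue measure restricted to the cube. -/
def μcube (d : ℕ) : Measure (Pt d) := volume.restrict (cube d)

/-- `L²(Ω)` inner product. -/
def L2ip (d : ℕ) (u v : Pt d → ℝ) : ℝ := ∫ x, u x * v x ∂(μcube d)

/-- Squared `L²(Ω)` norm. -/
def L2sq (d : ℕ) (u : Pt d → ℝ) : ℝ := ∫ x, (u x) ^ 2 ∂(μcube d)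

/-- `⟨u, Hu⟩ = ∫_Ω (|∇u|² + V u²)`. -/
def energy (d : ℕ) (V u : Pt d → ℝ) : ℝ :=
  ∫ x, (‖gradient u x‖ ^ 2 + V x * (u x) ^ 2) ∂(μcube d)

/-- Membership in `H¹(Ω)` (via a differentiable representative). -/
def MemH1 (d : ℕ) (u : Pt d → ℝ) : Prop :=
  ContinuousOn u (closure (cube d)) ∧
  (∀ x ∈ cube d, DifferentiableAt ℝ u x) ∧
  Integrable (fun x => (u x) ^ 2 + ‖gradient u x‖ ^ 2) (μcube d)

/-- Membership in `H¹₀(Ω)`. -/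
def MemH10 (d : ℕ) (u : Pt d → ℝ) : Prop :=
  MemH1 d u ∧ ∀ x ∈ frontier (cube d), u x = 0

/-- `ψ` is a (weak) Dirichlet eigenfunction of `-Δ + V` on `Ω` with eigenvalue `lam`. -/
def IsEigenfun (d : ℕ) (V : Pt d → ℝ) (lam : ℝ) (ψ : Pt d → ℝ) : Prop :=
  MemH10 d ψ ∧ L2sq d ψ ≠ 0 ∧
  ∀ v, MemH10 d v →
    (∫ x, (⟪gradient ψ x, gradient v x⟫ + V x * ψ x * v x) ∂(μcube d))
      = lam * ∫ x, ψ x * v x ∂(μcube d)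

/-- The spectral setting: for `j ≥ 1`, `(lam j, ψ j)` enumerate the Dirichlet
spectrum of `-Δ + V` on `Ω` in ascending order (with multiplicity), the
eigenfunctions forming an orthonormal basis of `L²(Ω)`. -/
def SpectralSetting (d : ℕ) (V : Pt d → ℝ) (lam : ℕ → ℝ) (ψ : ℕ → Pt d → ℝ) : Prop :=
  0 < lam 1 ∧
  (∀ i j, 1 ≤ i → i ≤ j → lam i ≤ lam j) ∧
  Filter.Tendsto lam Filter.atTop Filter.atTop ∧
  (∀ i j, 1 ≤ i → 1 ≤ j → L2ip d (ψ i) (ψ j) = if i = j then 1 else 0) ∧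
  (∀ j, 1 ≤ j → IsEigenfun d V (lam j) (ψ j)) ∧
  (∀ μ φ, IsEigenfun d V μ φ → lam 1 ≤ μ) ∧
  (∀ u, MemH10 d u → L2sq d u = ∑' j : ℕ, (L2ip d u (ψ (j + 1))) ^ 2) ∧
  (∀ u, MemH10 d u → energy d V u = ∑' j : ℕ, lam (j + 1) * (L2ip d u (ψ (j + 1))) ^ 2)

/-- The population loss `L_k` with orthogonality penalty parameter `β`. -/
def loss (d : ℕ) (V : Pt d → ℝ) (ψ : ℕ → Pt d → ℝ) (β : ℝ) (k : ℕ)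
    (u : Pt d → ℝ) : ℝ :=
  energy d V u / L2sq d u
    + β * (∑ j ∈ Finset.Ico 1 k, (L2ip d u (ψ j)) ^ 2) / L2sq d u

/-- The orthogonal projection of `u` onto the orthogonal complement of the
`k`-th eigenspace `U_k = span{ψ_1,…,ψ_{k-1}}^⊥ ∩ ker(H - λ_k I)`, which (in the
spectral setting) is spanned by `ψ_k, …, ψ_{k'-1}`. -/
def Pperp (d k k' : ℕ) (ψ : ℕ → Pt d → ℝ) (u : Pt d → ℝ) : Pt d → ℝ :=
  fun x => u x - ∑ j ∈ Finset.Ico k k', L2ip d u (ψ j) * ψ j x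

/-- Squared `L²(Ω)` norm of the gradient. -/
def gradSq (d : ℕ) (u : Pt d → ℝ) : ℝ := ∫ x, ‖gradient u x‖ ^ 2 ∂(μcube d)

/-!
In the eigenbasis every quantity is a series in `a_j = ⟨u, ψ_j⟩²`: `‖u‖² = Σ a_j`,
`⟨u, Hu⟩ = Σ λ_j a_j`, and `P⊥` deletes the terms of the eigenspace `k ≤ j < k'`, on which
`λ_j = λ_k`. Term by term, `(L_k(u) - λ_k) ‖u‖² ≥ Σ_{j ∉ [k, k')} (λ_j + β [j < k] - λ_k) a_j`,
and each coefficient is at least `min (β + λ_1 - λ_k) (λ_{k'} - λ_k)`: this is (a). For (b),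
`⟨P⊥u, H P⊥u⟩ = ⟨u, Hu⟩ - λ_k ‖u‖² + λ_k ‖P⊥u‖²`, so `V ≥ V_min` gives
`‖∇P⊥u‖² ≤ (L_k(u) - λ_k) ‖u‖² + (λ_k - V_min) ‖P⊥u‖²`, and (a) bounds the last term.

`V` is not assumed measurable, so `∫ V f²` has to be shown to be a genuine integral. By Bessel's
inequality and Parseval's identity `u` vanishes a.e. off the union of the supports of the `ψ_j`,
and on the support of `ψ_j` the potential `V = (V ψ_j²) / ψ_j²` is a.e.-measurable because the
energy of `ψ_j` equals `λ_j ≠ 0`, hence is the integral of an integrable function.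
-/

section L2

variable {α : Type*} [MeasurableSpace α] {μ : Measure α}

lemma integral_mul_eq_inner_toLp {f g : α → ℝ} (hf : MemLp f 2 μ) (hg : MemLp g 2 μ) :
    ∫ x, f x * g x ∂μ = ⟪hf.toLp f, hg.toLp g⟫ := by
  rw [L2.inner_def]
  refine integral_congr_ae ?_
  filter_upwards [hf.coeFn_toLp, hg.coeFn_toLp] with x hfx hgx
  rw [hfx, hgx, Real.inner_apply]

lemma sum_sq_integral_mul_le_integral_sq {ι : Type*} [DecidableEq ι] {f : α → ℝ}
    (hf : MemLp f 2 μ) {e : ι → α → ℝ} (he : ∀ i, MemLp (e i) 2 μ)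
    (horth : ∀ i j, ∫ x, e i x * e j x ∂μ = if i = j then 1 else 0) (s : Finset ι) :
    ∑ i ∈ s, (∫ x, f x * e i x ∂μ) ^ 2 ≤ ∫ x, f x ^ 2 ∂μ := by
  have hon : Orthonormal ℝ fun i => (he i).toLp (e i) := by
    rw [orthonormal_iff_ite]
    intro i j
    rw [← integral_mul_eq_inner_toLp, horth]
  have hbessel := hon.sum_inner_products_le (hf.toLp f) (s := s)
  simp only [← integral_mul_eq_inner_toLp, Real.norm_eq_abs, sq_abs] at hbessel
  rw [← real_inner_self_eq_norm_sq, ← integral_mul_eq_inner_toLp] at hbessel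
  simpa only [mul_comm, sq] using hbessel

lemma ae_eq_zero_of_notMem_of_integral_sq_eq_tsum {f : α → ℝ} (hf : MemLp f 2 μ)
    {e : ℕ → α → ℝ} (he : ∀ i, MemLp (e i) 2 μ)
    (horth : ∀ i j, ∫ x, e i x * e j x ∂μ = if i = j then 1 else 0)
    {s : Set α} (hs : NullMeasurableSet s μ) (hes : ∀ i, ∀ x ∉ s, e i x = 0)
    (hparseval : ∫ x, f x ^ 2 ∂μ = ∑' i, (∫ x, f x * e i x ∂μ) ^ 2) :
    ∀ᵐ x ∂μ, x ∉ s → f x = 0 := by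
  have hbessel : ∫ x, f x ^ 2 ∂μ ≤ ∫ x in s, f x ^ 2 ∂μ := by
    rw [hparseval]
    refine Real.tsum_le_of_sum_range_le (fun _ => sq_nonneg _) fun n => ?_
    have hrestrict : ∀ {g : α → ℝ} (i : ℕ), ∫ x in s, g x * e i x ∂μ = ∫ x, g x * e i x ∂μ :=
      fun i => setIntegral_eq_integral_of_forall_compl_eq_zero fun x hx => by simp [hes i x hx]
    simpa only [hrestrict] using sum_sq_integral_mul_le_integral_sq (hf.restrict s)
      (fun i => (he i).restrict s) (fun i j => by rw [hrestrict, horth]) (Finset.range n)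
  have hcompl : ∫ x in sᶜ, f x ^ 2 ∂μ = 0 := by
    have := integral_add_compl₀ hs hf.integrable_sq
    exact le_antisymm (by linarith) (integral_nonneg fun _ => sq_nonneg _)
  have hzero := (integral_eq_zero_iff_of_nonneg (fun _ => sq_nonneg _)
    hf.integrable_sq.restrict).1 hcompl
  filter_upwards [(ae_restrict_iff'₀ hs.compl).1 hzero] with x hx hxs
  exact pow_eq_zero_iff two_ne_zero |>.1 (hx hxs)

lemma aemeasurable_restrict_iUnion_ne_zero {ι : Type*} [Countable ι] {V : α → ℝ}
    {g : ι → α → ℝ} (hg : ∀ i, AEMeasurable (g i) μ)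
    (hVg : ∀ i, AEMeasurable (fun x => V x * g i x ^ 2) μ) :
    AEMeasurable V (μ.restrict (⋃ i, {x | g i x ≠ 0})) := by
  refine aemeasurable_iUnion_iff.2 fun i => ?_
  have hs : NullMeasurableSet {x | g i x ≠ 0} μ :=
    (hg i).nullMeasurable (measurableSet_singleton 0).compl
  refine ((hVg i).restrict.div ((hg i).restrict.pow_const 2)).congr ?_
  filter_upwards [ae_restrict_mem₀ hs] with x hx
  simp only [Pi.div_apply]
  field_simp [show g i x ≠ 0 from hx]

lemma aemeasurable_mul_of_ae_eq_zero_of_notMem {V h : α → ℝ} {s : Set α}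
    (hs : NullMeasurableSet s μ) (hV : AEMeasurable V (μ.restrict s)) (hh : AEMeasurable h μ)
    (h0 : ∀ᵐ x ∂μ, x ∉ s → h x = 0) : AEMeasurable (fun x => V x * h x) μ := by
  refine (((aemeasurable_indicator_iff₀ hs).2 hV).mul hh).congr ?_
  filter_upwards [h0] with x hx
  by_cases hxs : x ∈ s
  · simp [hxs]
  · simp [hxs, hx hxs]

end L2

section Gradient

variable {F : Type*} [NormedAddCommGroup F] [InnerProductSpace ℝ F] [CompleteSpace F]
  {f g : F → ℝ} {x : F}

lemma gradient_add (hf : DifferentiableAt ℝ f x) (hg : DifferentiableAt ℝ g x) :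
    gradient (fun y => f y + g y) x = gradient f x + gradient g x := by
  simp only [gradient, fderiv_fun_add hf hg, map_add]

lemma gradient_const_mul (c : ℝ) (hf : DifferentiableAt ℝ f x) :
    gradient (fun y => c * f y) x = c • gradient f x := by
  simp only [gradient, fderiv_const_mul hf c, map_smul]

lemma measurable_gradient [MeasurableSpace F] [BorelSpace F] [SecondCountableTopology F]
    (f : F → ℝ) : Measurable (gradient f) :=
  (InnerProductSpace.toDual ℝ F).symm.continuous.measurable.comp (measurable_fderiv ℝ f)

end Gradient

section Cube

variable {d : ℕ} {f g : Pt d → ℝ}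

lemma measurableSet_cube (d : ℕ) : MeasurableSet (cube d) := by
  have : cube d = ⋂ i, (fun x : Pt d => x i) ⁻¹' Ioo 0 1 := by
    ext x
    simp [cube]
  rw [this]
  exact MeasurableSet.iInter fun i => measurableSet_Ioo.preimage (by fun_prop)

lemma ae_mem_cube (d : ℕ) : ∀ᵐ x ∂(μcube d), x ∈ cube d :=
  ae_restrict_mem (measurableSet_cube d)

lemma MemH1.aemeasurable (hf : MemH1 d f) : AEMeasurable f (μcube d) :=
  (hf.1.mono subset_closure).aemeasurable (measurableSet_cube d)

lemma MemH1.memLp (hf : MemH1 d f) : MemLp f 2 (μcube d) := by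
  refine (memLp_two_iff_integrable_sq hf.aemeasurable.aestronglyMeasurable).2 ?_
  refine hf.2.2.mono' (hf.aemeasurable.pow_const 2).aestronglyMeasurable ?_
  filter_upwards with x
  rw [Real.norm_of_nonneg (sq_nonneg _)]
  linarith [sq_nonneg ‖gradient f x‖]

lemma MemH1.memLp_gradient (hf : MemH1 d f) : MemLp (gradient f) 2 (μcube d) := by
  refine (memLp_two_iff_integrable_sq_norm
    (measurable_gradient f).aemeasurable.aestronglyMeasurable).2 ?_
  refine hf.2.2.mono' ((measurable_gradient f).norm.pow_const 2).aestronglyMeasurable ?_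
  filter_upwards with x
  rw [Real.norm_of_nonneg (sq_nonneg _)]
  linarith [sq_nonneg (f x)]

lemma MemH1.integrable_norm_gradient_sq (hf : MemH1 d f) :
    Integrable (fun x => ‖gradient f x‖ ^ 2) (μcube d) :=
  (memLp_two_iff_integrable_sq_norm hf.memLp_gradient.1).1 hf.memLp_gradient

lemma MemH1.of_memLp (hc : ContinuousOn f (closure (cube d)))
    (hd : ∀ x ∈ cube d, DifferentiableAt ℝ f x) (hf : MemLp f 2 (μcube d))
    (hgrad : MemLp (gradient f) 2 (μcube d)) : MemH1 d f :=
  ⟨hc, hd, hf.integrable_sq.add ((memLp_two_iff_integrable_sq_norm hgrad.1).1 hgrad)⟩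

lemma MemH1.add (hf : MemH1 d f) (hg : MemH1 d g) : MemH1 d (fun x => f x + g x) := by
  refine .of_memLp (hf.1.add hg.1) (fun x hx => (hf.2.1 x hx).add (hg.2.1 x hx))
    (hf.memLp.add hg.memLp) ((hf.memLp_gradient.add hg.memLp_gradient).ae_eq ?_)
  filter_upwards [ae_mem_cube d] with x hx
  exact (gradient_add (hf.2.1 x hx) (hg.2.1 x hx)).symm

lemma MemH1.const_mul (c : ℝ) (hf : MemH1 d f) : MemH1 d (fun x => c * f x) := by
  refine .of_memLp (continuousOn_const.mul hf.1) (fun x hx => (hf.2.1 x hx).const_mul c)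
    (hf.memLp.const_mul c) ((hf.memLp_gradient.const_smul c).ae_eq ?_)
  filter_upwards [ae_mem_cube d] with x hx
  exact (gradient_const_mul c (hf.2.1 x hx)).symm

lemma MemH1.sub (hf : MemH1 d f) (hg : MemH1 d g) : MemH1 d (fun x => f x - g x) := by
  simpa only [neg_one_mul, ← sub_eq_add_neg] using hf.add (hg.const_mul (-1))

lemma memH1_zero : MemH1 d (fun _ => 0) :=
  ⟨continuousOn_const, fun _ _ => differentiableAt_const 0, by simp [gradient_fun_const]⟩

lemma MemH1.finset_sum {ι : Type*} (s : Finset ι) {f : ι → Pt d → ℝ}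
    (hf : ∀ i ∈ s, MemH1 d (f i)) : MemH1 d (fun x => ∑ i ∈ s, f i x) := by
  classical
  induction s using Finset.induction_on with
  | empty => simpa using memH1_zero
  | insert i s hi ih =>
    simp only [Finset.sum_insert hi]
    exact (hf i (Finset.mem_insert_self i s)).add
      (ih fun j hj => hf j (Finset.mem_insert_of_mem hj))

end Cube

section Energy

variable {d : ℕ} {V f : Pt d → ℝ}

lemma L2sq_nonneg (f : Pt d → ℝ) : 0 ≤ L2sq d f :=
  integral_nonneg fun _ => sq_nonneg _

lemma gradSq_nonneg (f : Pt d → ℝ) : 0 ≤ gradSq d f :=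
  integral_nonneg fun _ => sq_nonneg _

lemma IsEigenfun.energy_eq {lam : ℝ} (h : IsEigenfun d V lam f) :
    energy d V f = lam * L2sq d f := by
  have hweak := h.2.2 f h.1
  simp only [real_inner_self_eq_norm_sq, mul_assoc, ← sq] at hweak
  exact hweak

lemma aemeasurable_mul_sq_of_energy_ne_zero (h : energy d V f ≠ 0) :
    AEMeasurable (fun x => V x * f x ^ 2) (μcube d) := by
  refine ((Integrable.of_integral_ne_zero h).aemeasurable.sub
    ((measurable_gradient f).norm.pow_const 2).aemeasurable).congr ?_
  filter_upwards with x
  simp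

lemma gradSq_add_mul_L2sq_le_energy {Vmin Vmax : ℝ}
    (hV : ∀ x ∈ cube d, Vmin ≤ V x ∧ V x ≤ Vmax) (hf : MemH1 d f)
    (hVf : AEMeasurable (fun x => V x * f x ^ 2) (μcube d)) :
    gradSq d f + Vmin * L2sq d f ≤ energy d V f := by
  have hf2 := hf.memLp.integrable_sq
  have hVf2 : Integrable (fun x => V x * f x ^ 2) (μcube d) := by
    refine (hf2.const_mul (max |Vmin| |Vmax|)).mono' hVf.aestronglyMeasurable ?_
    filter_upwards [ae_mem_cube d] with x hx
    rw [norm_mul, Real.norm_of_nonneg (sq_nonneg _)]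
    exact mul_le_mul_of_nonneg_right (abs_le_max_abs_abs (hV x hx).1 (hV x hx).2) (sq_nonneg _)
  have hpot : Vmin * L2sq d f ≤ ∫ x, V x * f x ^ 2 ∂(μcube d) := by
    rw [L2sq, ← integral_const_mul]
    refine integral_mono_ae (hf2.const_mul Vmin) hVf2 ?_
    filter_upwards [ae_mem_cube d] with x hx
    exact mul_le_mul_of_nonneg_right (hV x hx).1 (sq_nonneg _)
  rw [energy, integral_add hf.integrable_norm_gradient_sq hVf2]
  exact add_le_add_right hpot _

end Energy

section Series

variable {lam a : ℕ → ℝ} {k k' : ℕ}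

lemma Summable.ite_zero_left {f : ℕ → ℝ} (hf : Summable f) (p : ℕ → Prop) [DecidablePred p] :
    Summable fun j => if p j then 0 else f j :=
  (hf.indicator {j | ¬p j}).congr fun j => by by_cases h : p j <;> simp [h]

lemma eq_zero_of_tsum_sq_eq_zero {c : ℕ → ℝ} (hc : Summable fun j => c j ^ 2)
    (h : ∑' j, c j ^ 2 = 0) (j : ℕ) : c j = 0 := by
  have := (hasSum_zero_iff_of_nonneg fun _ => sq_nonneg _).1 (h ▸ hc.hasSum)
  exact pow_eq_zero_iff two_ne_zero |>.1 (congrFun this j)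

lemma min_mul_tsum_ite_add_le (hmono : ∀ i j, 1 ≤ i → i ≤ j → lam i ≤ lam j) (hk : 1 ≤ k)
    (hkk' : k ≤ k') (ha : ∀ j, 0 ≤ a j) (hsa : Summable fun j => a (j + 1))
    (hsla : Summable fun j => lam (j + 1) * a (j + 1)) (β : ℝ) :
    min (β + lam 1 - lam k) (lam k' - lam k)
        * ∑' j, (if k ≤ j + 1 ∧ j + 1 < k' then 0 else a (j + 1)) + lam k * ∑' j, a (j + 1)
      ≤ ∑' j, lam (j + 1) * a (j + 1) + β * ∑ j ∈ Finset.Ico 1 k, a j := by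
  set m := min (β + lam 1 - lam k) (lam k' - lam k)
  have hpenalty : ∑ j ∈ Finset.Ico 1 k, a j = ∑' j, if j + 1 < k then a (j + 1) else 0 := by
    rw [Finset.sum_Ico_eq_sum_range, sum_eq_tsum_indicator]
    congr 1
    funext j
    simp only [Set.indicator_apply, Finset.coe_range, Set.mem_Iio, add_comm 1]
    congr 1
    exact propext (by omega)
  have hspenalty : Summable fun j => if j + 1 < k then a (j + 1) else 0 :=
    (hsa.indicator {j | j + 1 < k}).congr fun j => by simp [Set.indicator_apply]
  rw [hpenalty, ← tsum_mul_left, ← tsum_mul_left, ← tsum_mul_left,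
    ← ((hsa.ite_zero_left _).mul_left m).tsum_add (hsa.mul_left _),
    ← hsla.tsum_add (hspenalty.mul_left β)]
  refine Summable.tsum_le_tsum (fun j => ?_) (((hsa.ite_zero_left _).mul_left m).add
    (hsa.mul_left _)) (hsla.add (hspenalty.mul_left β))
  have hm_le : m * a (j + 1) ≤ (β + lam 1 - lam k) * a (j + 1) :=
    mul_le_mul_of_nonneg_right (min_le_left _ _) (ha _)
  have hm_le' : m * a (j + 1) ≤ (lam k' - lam k) * a (j + 1) :=
    mul_le_mul_of_nonneg_right (min_le_right _ _) (ha _)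
  by_cases hbelow : j + 1 < k
  · have := mul_le_mul_of_nonneg_right (hmono 1 (j + 1) le_rfl (by omega)) (ha (j + 1))
    rw [if_neg (show ¬(k ≤ j + 1 ∧ j + 1 < k') by omega), if_pos hbelow]
    linarith
  · by_cases hgap : j + 1 < k'
    · have := mul_le_mul_of_nonneg_right (hmono k (j + 1) hk (by omega)) (ha (j + 1))
      rw [if_pos (show k ≤ j + 1 ∧ j + 1 < k' by omega), if_neg hbelow]
      linarith
    · have := mul_le_mul_of_nonneg_right (hmono k' (j + 1) (by omega) (by omega)) (ha (j + 1))
      rw [if_neg (show ¬(k ≤ j + 1 ∧ j + 1 < k') by omega), if_neg hbelow]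
      linarith

lemma tsum_ite_mul_eq (hmono : ∀ i j, 1 ≤ i → i ≤ j → lam i ≤ lam j) (hk : 1 ≤ k)
    (hk' : lam (k' - 1) = lam k) (hsa : Summable fun j => a (j + 1))
    (hsla : Summable fun j => lam (j + 1) * a (j + 1)) :
    ∑' j, (if k ≤ j + 1 ∧ j + 1 < k' then 0 else lam (j + 1) * a (j + 1))
      = ∑' j, lam (j + 1) * a (j + 1) - lam k * ∑' j, a (j + 1)
        + lam k * ∑' j, (if k ≤ j + 1 ∧ j + 1 < k' then 0 else a (j + 1)) := by
  rw [← tsum_mul_left, ← tsum_mul_left, ← hsla.tsum_sub (hsa.mul_left _),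
    ← (hsla.sub (hsa.mul_left _)).tsum_add ((hsa.ite_zero_left _).mul_left _)]
  congr 1
  funext j
  split_ifs with hgap
  · have := hmono (j + 1) (k' - 1) (by omega) (by omega)
    rw [le_antisymm (hk' ▸ this) (hmono k (j + 1) hk hgap.1)]
    ring
  · ring

end Series

namespace SpectralSetting

variable {d k k' : ℕ} {V : Pt d → ℝ} {lam : ℕ → ℝ} {ψ : ℕ → Pt d → ℝ}

lemma memH1 (hspec : SpectralSetting d V lam ψ) {j : ℕ} (hj : 1 ≤ j) : MemH1 d (ψ j) :=
  (hspec.2.2.2.2.1 j hj).1.1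

lemma lam_pos (hspec : SpectralSetting d V lam ψ) {j : ℕ} (hj : 1 ≤ j) : 0 < lam j :=
  hspec.1.trans_le (hspec.2.1 1 j le_rfl hj)

lemma integral_mul_succ (hspec : SpectralSetting d V lam ψ) (i j : ℕ) :
    ∫ x, ψ (i + 1) x * ψ (j + 1) x ∂(μcube d) = if i = j then 1 else 0 := by
  simpa [L2ip] using hspec.2.2.2.1 (i + 1) (j + 1) (by omega) (by omega)

lemma L2sq_eq_one (hspec : SpectralSetting d V lam ψ) {j : ℕ} (hj : 1 ≤ j) :
    L2sq d (ψ j) = 1 := by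
  simpa [L2sq, L2ip, sq] using hspec.2.2.2.1 j j hj hj

lemma energy_eq (hspec : SpectralSetting d V lam ψ) {j : ℕ} (hj : 1 ≤ j) :
    energy d V (ψ j) = lam j := by
  rw [(hspec.2.2.2.2.1 j hj).energy_eq, hspec.L2sq_eq_one hj, mul_one]

lemma aemeasurable_mul_sq (hspec : SpectralSetting d V lam ψ) {j : ℕ} (hj : 1 ≤ j) :
    AEMeasurable (fun x => V x * ψ j x ^ 2) (μcube d) :=
  aemeasurable_mul_sq_of_energy_ne_zero (by rw [hspec.energy_eq hj]; exact (hspec.lam_pos hj).ne')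

lemma le_lam_one (hspec : SpectralSetting d V lam ψ) {Vmin Vmax : ℝ}
    (hV : ∀ x ∈ cube d, Vmin ≤ V x ∧ V x ≤ Vmax) : Vmin ≤ lam 1 := by
  have h := gradSq_add_mul_L2sq_le_energy hV (hspec.memH1 le_rfl) (hspec.aemeasurable_mul_sq le_rfl)
  rw [hspec.energy_eq le_rfl, hspec.L2sq_eq_one le_rfl, mul_one] at h
  linarith [gradSq_nonneg (ψ 1)]

lemma aemeasurable_mul (hspec : SpectralSetting d V lam ψ) {u h : Pt d → ℝ} (hu : MemH1 d u)
    (hParseval : L2sq d u = ∑' j : ℕ, (L2ip d u (ψ (j + 1))) ^ 2)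
    (hh : AEMeasurable h (μcube d)) (h0 : ∀ x, u x = 0 → (∀ j, ψ (j + 1) x = 0) → h x = 0) :
    AEMeasurable (fun x => V x * h x) (μcube d) := by
  set N := ⋃ j : ℕ, {x | ψ (j + 1) x ≠ 0}
  have hψ (j : ℕ) : MemH1 d (ψ (j + 1)) := hspec.memH1 (by omega)
  have hN : NullMeasurableSet N (μcube d) := .iUnion fun j =>
    (hψ j).aemeasurable.nullMeasurable (measurableSet_singleton 0).compl
  have hψN (j : ℕ) (x : Pt d) (hx : x ∉ N) : ψ (j + 1) x = 0 := by
    simp_all [N]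
  have huN := ae_eq_zero_of_notMem_of_integral_sq_eq_tsum hu.memLp (fun j => (hψ j).memLp)
    hspec.integral_mul_succ hN hψN hParseval
  refine aemeasurable_mul_of_ae_eq_zero_of_notMem hN (aemeasurable_restrict_iUnion_ne_zero
    (fun j => (hψ j).aemeasurable) fun j => hspec.aemeasurable_mul_sq (by omega)) hh ?_
  filter_upwards [huN] with x hx hxN
  exact h0 x (hx hxN) fun j => hψN j x hxN

lemma summable_sq_L2ip (hspec : SpectralSetting d V lam ψ) {u : Pt d → ℝ} (hu : MemH1 d u) :
    Summable fun j => L2ip d u (ψ (j + 1)) ^ 2 :=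
  summable_of_sum_range_le (fun _ => sq_nonneg _) fun _ =>
    sum_sq_integral_mul_le_integral_sq hu.memLp (fun _ => (hspec.memH1 (by omega)).memLp)
      hspec.integral_mul_succ _

lemma L2ip_eq_zero_of_L2sq_eq_zero (hspec : SpectralSetting d V lam ψ) {u : Pt d → ℝ}
    (hu : MemH1 d u) (hParseval : L2sq d u = ∑' j : ℕ, (L2ip d u (ψ (j + 1))) ^ 2)
    (hA : L2sq d u = 0) (j : ℕ) : L2ip d u (ψ (j + 1)) = 0 :=
  eq_zero_of_tsum_sq_eq_zero (hspec.summable_sq_L2ip hu) (hParseval ▸ hA) j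

lemma summable_lam_mul_sq_L2ip (hspec : SpectralSetting d V lam ψ) {Vmin Vmax : ℝ}
    (hVmin : 0 < Vmin) (hV : ∀ x ∈ cube d, Vmin ≤ V x ∧ V x ≤ Vmax) {u : Pt d → ℝ}
    (hu : MemH1 d u) (hParseval : L2sq d u = ∑' j : ℕ, (L2ip d u (ψ (j + 1))) ^ 2)
    (hEnergy : energy d V u = ∑' j : ℕ, lam (j + 1) * (L2ip d u (ψ (j + 1))) ^ 2) :
    Summable fun j => lam (j + 1) * L2ip d u (ψ (j + 1)) ^ 2 := by
  by_contra hns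
  have hVu := gradSq_add_mul_L2sq_le_energy hV hu (hspec.aemeasurable_mul hu hParseval
    (hu.aemeasurable.pow_const 2) fun x hx _ => by simp [hx])
  rw [hEnergy, tsum_eq_zero_of_not_summable hns] at hVu
  have hA : L2sq d u = 0 := by nlinarith [gradSq_nonneg u, L2sq_nonneg u]
  exact hns (by simp [hspec.L2ip_eq_zero_of_L2sq_eq_zero hu hParseval hA])

/-- Where `‖u‖ = 0` the quotient `L_k(u)` is junk, but then every term on the right vanishes. -/
lemma loss_sub_mul_L2sq (hspec : SpectralSetting d V lam ψ) {u : Pt d → ℝ} (hu : MemH1 d u)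
    (hParseval : L2sq d u = ∑' j : ℕ, (L2ip d u (ψ (j + 1))) ^ 2)
    (hEnergy : energy d V u = ∑' j : ℕ, lam (j + 1) * (L2ip d u (ψ (j + 1))) ^ 2)
    (β μ : ℝ) :
    (loss d V ψ β k u - μ) * L2sq d u
      = energy d V u + β * ∑ j ∈ Finset.Ico 1 k, L2ip d u (ψ j) ^ 2 - μ * L2sq d u := by
  rcases eq_or_ne (L2sq d u) 0 with hA | hA
  · have hzero := hspec.L2ip_eq_zero_of_L2sq_eq_zero hu hParseval hA
    have hB : ∑ j ∈ Finset.Ico 1 k, L2ip d u (ψ j) ^ 2 = 0 :=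
      Finset.sum_eq_zero fun j hj => by
        obtain ⟨i, rfl⟩ : ∃ i, j = i + 1 := ⟨j - 1, by simp at hj; omega⟩
        simp [hzero i]
    simp [hA, hEnergy, hzero, hB]
  · simp only [loss]
    field_simp

lemma memH1_Pperp (hspec : SpectralSetting d V lam ψ) {u : Pt d → ℝ} (hk : 1 ≤ k)
    (hu : MemH1 d u) : MemH1 d (Pperp d k k' ψ u) :=
  hu.sub (.finset_sum _ fun _ hj =>
    (hspec.memH1 (hk.trans (Finset.mem_Ico.1 hj).1)).const_mul _)

lemma gradSq_add_mul_L2sq_le_energy_Pperp (hspec : SpectralSetting d V lam ψ) {Vmin Vmax : ℝ}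
    (hV : ∀ x ∈ cube d, Vmin ≤ V x ∧ V x ≤ Vmax) {u : Pt d → ℝ} (hk : 1 ≤ k) (hu : MemH1 d u)
    (hParseval : L2sq d u = ∑' j : ℕ, (L2ip d u (ψ (j + 1))) ^ 2) :
    gradSq d (Pperp d k k' ψ u) + Vmin * L2sq d (Pperp d k k' ψ u)
      ≤ energy d V (Pperp d k k' ψ u) := by
  have hPu := hspec.memH1_Pperp (k' := k') hk hu
  refine gradSq_add_mul_L2sq_le_energy hV hPu
    (hspec.aemeasurable_mul hu hParseval (hPu.aemeasurable.pow_const 2) fun x hux hψx => ?_)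
  have hsum : ∑ j ∈ Finset.Ico k k', L2ip d u (ψ j) * ψ j x = 0 :=
    Finset.sum_eq_zero fun j hj => by
      obtain ⟨i, rfl⟩ : ∃ i, j = i + 1 := ⟨j - 1, by simp at hj; omega⟩
      rw [hψx i, mul_zero]
  simp [Pperp, hux, hsum]

end SpectralSetting

theorem statement1_general
    (d k k' : ℕ) (hk : 1 ≤ k)
    (V : Pt d → ℝ) (Vmin Vmax : ℝ) (hVmin : 0 < Vmin)
    (hV : ∀ x ∈ cube d, Vmin ≤ V x ∧ V x ≤ Vmax)
    (lam : ℕ → ℝ) (ψ : ℕ → Pt d → ℝ)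
    (hspec : SpectralSetting d V lam ψ)
    -- `λ_{k'}` is the first eigenvalue strictly greater than `λ_k`
    (hk'1 : k + 1 ≤ k') (hk'2 : lam k < lam k') (hk'3 : lam (k' - 1) = lam k)
    (u : Pt d → ℝ) (hu : MemH1 d u)
    (hParseval : L2sq d u = ∑' j : ℕ, (L2ip d u (ψ (j + 1))) ^ 2)
    (hEnergy : energy d V u = ∑' j : ℕ, lam (j + 1) * (L2ip d u (ψ (j + 1))) ^ 2)
    (hParsevalP : L2sq d (Pperp d k k' ψ u)
      = ∑' j : ℕ, (if k ≤ j + 1 ∧ j + 1 < k' then 0 else (L2ip d u (ψ (j + 1))) ^ 2))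
    (hEnergyP : energy d V (Pperp d k k' ψ u)
      = ∑' j : ℕ, (if k ≤ j + 1 ∧ j + 1 < k' then 0
          else lam (j + 1) * (L2ip d u (ψ (j + 1))) ^ 2))
    (β : ℝ) (hβ : lam k - lam 1 < β) :
    L2sq d (Pperp d k k' ψ u)
        ≤ (loss d V ψ β k u - lam k) / min (β + lam 1 - lam k) (lam k' - lam k)
          * L2sq d u ∧
    gradSq d (Pperp d k k' ψ u)
        ≤ (loss d V ψ β k u - lam k)
          * ((lam k - Vmin) / min (β + lam 1 - lam k) (lam k' - lam k) + 1)
          * L2sq d u := by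
  have hmono := hspec.2.1
  have hsa := hspec.summable_sq_L2ip hu
  have hsla := hspec.summable_lam_mul_sq_L2ip hVmin hV hu hParseval hEnergy
  set m := min (β + lam 1 - lam k) (lam k' - lam k)
  set D := energy d V u + β * ∑ j ∈ Finset.Ico 1 k, L2ip d u (ψ j) ^ 2 - lam k * L2sq d u
  have hL2 : m * L2sq d (Pperp d k k' ψ u) ≤ D := by
    have := min_mul_tsum_ite_add_le (a := fun j => L2ip d u (ψ j) ^ 2) hmono hk (k' := k')
      (by omega) (fun _ => sq_nonneg _) hsa hsla β
    rw [← hParsevalP, ← hParseval, ← hEnergy] at this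
    linarith
  have hgrad : gradSq d (Pperp d k k' ψ u) ≤ D + (lam k - Vmin) * L2sq d (Pperp d k k' ψ u) := by
    have hEP := tsum_ite_mul_eq (a := fun j => L2ip d u (ψ j) ^ 2) hmono hk hk'3 hsa hsla
    rw [← hEnergyP, ← hParsevalP, ← hEnergy, ← hParseval] at hEP
    have hpenalty : 0 ≤ β * ∑ j ∈ Finset.Ico 1 k, L2ip d u (ψ j) ^ 2 :=
      mul_nonneg (by linarith [hmono 1 k le_rfl hk]) (Finset.sum_nonneg fun _ _ => sq_nonneg _)
    linarith [hspec.gradSq_add_mul_L2sq_le_energy_Pperp (k' := k') hV hk hu hParseval]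
  have hD : (loss d V ψ β k u - lam k) * L2sq d u = D :=
    hspec.loss_sub_mul_L2sq hu hParseval hEnergy β (lam k)
  have hm : 0 < m := lt_min (by linarith) (by linarith)
  have hVk : Vmin ≤ lam k := (hspec.le_lam_one hV).trans (hmono 1 k le_rfl hk)
  have hT : L2sq d (Pperp d k k' ψ u) ≤ D / m := by rw [le_div_iff₀ hm]; linarith
  refine ⟨by rwa [div_mul_eq_mul_div, hD], ?_⟩
  calc gradSq d (Pperp d k k' ψ u) ≤ D + (lam k - Vmin) * (D / m) := by
        nlinarith [mul_le_mul_of_nonneg_left hT (sub_nonneg.2 hVk)]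
    _ = _ := by rw [← hD]; ring

/-- Proposition 2.2: under Assumption 1, for every `u ∈ H¹(Ω)`
and `β > λ_k - λ_1`, the offset `P⊥u` of `u` from the eigenspace `U_k` satisfies
(a) `‖P⊥u‖²_{L²} ≤ (L_k(u)-λ_k)/min{β+λ_1-λ_k, λ_{k'}-λ_k} ‖u‖²_{L²}` and
(b) `‖∇(P⊥u)‖²_{L²} ≤ (L_k(u)-λ_k)((λ_k-V_min)/min{β+λ_1-λ_k, λ_{k'}-λ_k}+1)‖u‖²_{L²}`. -/
theorem statement1
    (d k k' : ℕ) (hd : 1 ≤ d) (hk : 1 ≤ k)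
    (V : Pt d → ℝ) (Vmin Vmax : ℝ) (hVmin : 0 < Vmin)
    (hV : ∀ x ∈ cube d, Vmin ≤ V x ∧ V x ≤ Vmax)
    (lam : ℕ → ℝ) (ψ : ℕ → Pt d → ℝ)
    (hspec : SpectralSetting d V lam ψ)
    -- `λ_{k'}` is the first eigenvalue strictly greater than `λ_k`
    (hk'1 : k + 1 ≤ k') (hk'2 : lam k < lam k') (hk'3 : lam (k' - 1) = lam k)
    (u : Pt d → ℝ) (hu : MemH1 d u)
    (hParseval : L2sq d u = ∑' j : ℕ, (L2ip d u (ψ (j + 1))) ^ 2)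
    (hEnergy : energy d V u = ∑' j : ℕ, lam (j + 1) * (L2ip d u (ψ (j + 1))) ^ 2)
    (hParsevalP : L2sq d (Pperp d k k' ψ u)
      = ∑' j : ℕ, (if k ≤ j + 1 ∧ j + 1 < k' then 0 else (L2ip d u (ψ (j + 1))) ^ 2))
    (hEnergyP : energy d V (Pperp d k k' ψ u)
      = ∑' j : ℕ, (if k ≤ j + 1 ∧ j + 1 < k' then 0
          else lam (j + 1) * (L2ip d u (ψ (j + 1))) ^ 2))
    (β : ℝ) (hβ : lam k - lam 1 < β) :
    L2sq d (Pperp d k k' ψ u)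
        ≤ (loss d V ψ β k u - lam k) / min (β + lam 1 - lam k) (lam k' - lam k)
          * L2sq d u ∧
    gradSq d (Pperp d k k' ψ u)
        ≤ (loss d V ψ β k u - lam k)
          * ((lam k - Vmin) / min (β + lam 1 - lam k) (lam k' - lam k) + 1)
          * L2sq d u :=
  statement1_general d k k' hk V Vmin Vmax hVmin hV lam ψ hspec hk'1 hk'2 hk'3 u hu hParseval
    hEnergy hParsevalP hEnergyP β hβ
end
end

section
/- Let (e_k)_{k≥1}, (Δ_k)_{k≥1} be nonnegative reals, (β_k)_{k≥1} positive reals, and (λ_k)_{k≥1}, (λ_{k'})_{k≥1} be such that m_j := min{β_j + λ_1 − λ_j, λ_{j'} − λ_j} > 0 for all j. Assume that for every k ≥ 1, e_k ≤ Δ_k + 8β_k Σ_{j=1}^{k−1} √(e_j/m_j). Define τ_k = max_{1≤j≤k} Δ_j/β_j, ρ_0 = 0 and ρ_k = max_{1≤j≤k} 4√(β_j/m_j). Then for every k ≥ 1, e_k ≤ β_k((k−1)ρ_{k−1} + √τ_k)². -/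
open Real

lemma sum_cast_range_id (n : ℕ) :
    ∑ i ∈ Finset.range n, (i : ℝ) = n * (n - 1) / 2 := by
  induction n with
  | zero => simp
  | succ n ih => rw [Finset.sum_range_succ, ih]; push_cast; ring

/-- Proposition 3.12, quadratic growth of the cumulative
error: if the energy excesses `e_k ≥ 0` satisfy the recursion
`e_k ≤ Δ_k + 8 β_k Σ_{j<k} √(e_j / m_j)` with
`m_j = min{β_j + lam 1 - lam j, lam' j - lam j} > 0`, then with
`τ_k = max_{1≤j≤k} Δ_j/β_j`, `ρ_0 = 0` and
`ρ_k = max_{1≤j≤k} 4√(β_j/m_j)`, one has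
`e_k ≤ β_k ((k-1) ρ_{k-1} + √τ_k)²` for every `k ≥ 1`. -/
theorem statement10
    (e Δ β lam lam' m τ ρ : ℕ → ℝ)
    (he : ∀ k, 1 ≤ k → 0 ≤ e k)
    (hΔ : ∀ k, 1 ≤ k → 0 ≤ Δ k)
    (hβ : ∀ k, 1 ≤ k → 0 < β k)
    (hm : ∀ j, 1 ≤ j → m j = min (β j + lam 1 - lam j) (lam' j - lam j))
    (hmpos : ∀ j, 1 ≤ j → 0 < m j)
    (hrec : ∀ k, 1 ≤ k →
      e k ≤ Δ k + 8 * β k * ∑ j ∈ Finset.Ico 1 k, Real.sqrt (e j / m j))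
    (hτ : ∀ k, 1 ≤ k → IsGreatest ((fun j => Δ j / β j) '' Set.Icc 1 k) (τ k))
    (hρ0 : ρ 0 = 0)
    (hρ : ∀ k, 1 ≤ k →
      IsGreatest ((fun j => 4 * Real.sqrt (β j / m j)) '' Set.Icc 1 k) (ρ k)) :
    ∀ k, 1 ≤ k →
      e k ≤ β k * (((k : ℝ) - 1) * ρ (k - 1) + Real.sqrt (τ k)) ^ 2 := by
  -- basic facts
  have hτ0 : ∀ k, 1 ≤ k → 0 ≤ τ k := by
    intro k hk
    obtain ⟨j, hj, hje⟩ := (hτ k hk).1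
    have h0 : (0:ℝ) ≤ Δ j / β j := div_nonneg (hΔ j hj.1) (hβ j hj.1).le
    have hje' : Δ j / β j = τ k := hje
    linarith
  have hρ0' : ∀ k, 0 ≤ ρ k := by
    intro k
    rcases Nat.eq_zero_or_pos k with h | h
    · rw [h, hρ0]
    · obtain ⟨j, hj, hje⟩ := (hρ k h).1
      have h0 : (0:ℝ) ≤ 4 * Real.sqrt (β j / m j) := by positivity
      have hje' : 4 * Real.sqrt (β j / m j) = ρ k := hje
      linarith
  have hτmono : ∀ a b, 1 ≤ a → a ≤ b → τ a ≤ τ b := by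
    intro a b ha hab
    obtain ⟨j, hj, hje⟩ := (hτ a ha).1
    have := (hτ b (ha.trans hab)).2 ⟨j, ⟨hj.1, hj.2.trans hab⟩, hje⟩
    exact this
  have hρmono : ∀ a b, 1 ≤ a → a ≤ b → ρ a ≤ ρ b := by
    intro a b ha hab
    obtain ⟨j, hj, hje⟩ := (hρ a ha).1
    exact (hρ b (ha.trans hab)).2 ⟨j, ⟨hj.1, hj.2.trans hab⟩, hje⟩
  have hΔτ : ∀ k, 1 ≤ k → Δ k ≤ β k * τ k := by
    intro k hk
    have := (hτ k hk).2 ⟨k, ⟨hk, le_refl k⟩, rfl⟩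
    have hb := hβ k hk
    calc Δ k = β k * (Δ k / β k) := by field_simp
    _ ≤ β k * τ k := by exact mul_le_mul_of_nonneg_left this hb.le
  intro k
  induction k using Nat.strong_induction_on with
  | _ k ih =>
  intro hk
  set n : ℕ := k - 1 with hn
  have hkn : (n : ℝ) = (k : ℝ) - 1 := by
    rw [hn]; push_cast [Nat.cast_sub hk]; ring
  set P : ℝ := ρ n with hP
  set T : ℝ := Real.sqrt (τ k) with hT
  have hPnn : 0 ≤ P := hρ0' n
  have hTnn : 0 ≤ T := Real.sqrt_nonneg _
  -- bound each term of the sum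
  have hterm : ∀ j ∈ Finset.Ico 1 k,
      Real.sqrt (e j / m j) ≤ P / 4 * (((j : ℝ) - 1) * P + T) := by
    intro j hj
    rw [Finset.mem_Ico] at hj
    obtain ⟨hj1, hjk⟩ := hj
    have hjn : j ≤ n := Nat.le_sub_one_of_lt hjk
    have hn1 : 1 ≤ n := hj1.trans hjn
    have hmj := hmpos j hj1
    have hbj := hβ j hj1
    have hj1R : (1:ℝ) ≤ (j:ℝ) := by exact_mod_cast hj1
    set A : ℝ := ((j : ℝ) - 1) * ρ (j - 1) + Real.sqrt (τ j) with hA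
    have hAnn : 0 ≤ A := by
      have := hρ0' (j - 1)
      have := Real.sqrt_nonneg (τ j)
      nlinarith
    have hej : e j ≤ β j * A ^ 2 := ih j hjk hj1
    have h1 : Real.sqrt (e j / m j) ≤ Real.sqrt (β j / m j) * A := by
      have hdiv : e j / m j ≤ (β j / m j) * A ^ 2 := by
        rw [div_le_iff₀ hmj] at *
        calc e j ≤ β j * A ^ 2 := hej
        _ = β j / m j * A ^ 2 * m j := by field_simp
      calc Real.sqrt (e j / m j) ≤ Real.sqrt ((β j / m j) * A ^ 2) :=
            Real.sqrt_le_sqrt hdiv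
      _ = Real.sqrt (β j / m j) * A := by
            rw [Real.sqrt_mul (by positivity), Real.sqrt_sq hAnn]
    have h2 : Real.sqrt (β j / m j) ≤ P / 4 := by
      have := (hρ n hn1).2 ⟨j, ⟨hj1, hjn⟩, rfl⟩
      linarith
    have h3 : A ≤ ((j : ℝ) - 1) * P + T := by
      have hρj : ρ (j - 1) ≤ P := by
        rcases Nat.eq_zero_or_pos (j - 1) with h | h
        · rw [h, hρ0]; exact hPnn
        · exact hρmono (j-1) n h ((Nat.sub_le j 1).trans hjn)
      have hτj : Real.sqrt (τ j) ≤ T := Real.sqrt_le_sqrt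
        (hτmono j k hj1 hjk.le)
      have : ((j : ℝ) - 1) * ρ (j - 1) ≤ ((j : ℝ) - 1) * P :=
        mul_le_mul_of_nonneg_left hρj (by linarith)
      rw [hA]; linarith
    calc Real.sqrt (e j / m j) ≤ Real.sqrt (β j / m j) * A := h1
    _ ≤ P / 4 * (((j : ℝ) - 1) * P + T) := by
        apply mul_le_mul h2 h3 hAnn (by positivity)
  -- sum the bounds
  have hsum : ∑ j ∈ Finset.Ico 1 k, Real.sqrt (e j / m j)
      ≤ P / 4 * ((n : ℝ) * ((n : ℝ) - 1) / 2 * P + (n : ℝ) * T) := by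
    calc ∑ j ∈ Finset.Ico 1 k, Real.sqrt (e j / m j)
        ≤ ∑ j ∈ Finset.Ico 1 k, (P / 4 * (((j : ℝ) - 1) * P + T)) :=
          Finset.sum_le_sum hterm
    _ = P / 4 * ((n : ℝ) * ((n : ℝ) - 1) / 2 * P + (n : ℝ) * T) := by
          have hcard : (Finset.Ico 1 k).card = n := Nat.card_Ico 1 k
          have hsumid : ∑ j ∈ Finset.Ico 1 k, ((j : ℝ) - 1)
              = (n : ℝ) * ((n : ℝ) - 1) / 2 := by
            rw [Finset.sum_Ico_eq_sum_range]
            have hc : ∀ i ∈ Finset.range (k - 1),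
                (((1 + i : ℕ) : ℝ) - 1) = (i : ℝ) := by
              intro i _; push_cast; ring
            rw [Finset.sum_congr rfl hc, sum_cast_range_id]
          rw [← Finset.mul_sum, Finset.sum_add_distrib, ← Finset.sum_mul,
            hsumid, Finset.sum_const, hcard, nsmul_eq_mul]
  -- conclude
  have hrk := hrec k hk
  have h8 : 8 * β k * (∑ j ∈ Finset.Ico 1 k, Real.sqrt (e j / m j))
      ≤ 8 * β k * (P / 4 * ((n : ℝ) * ((n : ℝ) - 1) / 2 * P + (n : ℝ) * T)) :=
    mul_le_mul_of_nonneg_left hsum (by nlinarith [hβ k hk])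
  have hT2 : T ^ 2 = τ k := Real.sq_sqrt (hτ0 k hk)
  have hΔk := hΔτ k hk
  have hb := hβ k hk
  have hnn : (0:ℝ) ≤ (n : ℝ) := Nat.cast_nonneg n
  rw [← hkn]
  nlinarith [mul_nonneg (mul_nonneg hb.le (sq_nonneg P)) hnn,
    mul_nonneg (mul_nonneg hb.le hPnn) hTnn]
end

section
/- Let g ∈ C²([−1,1]) with ‖g^{(r)}‖_{L∞([−1,1])} ≤ B for r = 0,1,2, and assume g'(ρ) = 0 for some ρ ∈ [0,1/2]. Let {z_j}_{j=0}^{2m} be the partition of [−1,1] with z_0 = −1, z_m = ρ, z_{2m} = 1, z_{j+1} − z_j = h_1 = (ρ+1)/m for 0 ≤ j ≤ m−1 and z_{j+1} − z_j = h_2 = (1−ρ)/m for m ≤ j ≤ 2m−1. Then there exists a two-layer ReLU network g_m(z) = c + Σ_{i=1}^{2m} a_i·ReLU(ε_i z − b_i) on [−1,1], with c = g(ρ), b_i ∈ [−1,1] and ε_i ∈ {±1}, such that ‖g − g_m‖_{W^{1,∞}([−1,1])} ≤ 2B/m; moreover |c| ≤ B, |a_i| ≤ 2Bh_1 for i < m,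 |a_m| ≤ Bh_1, |a_{m+1}| ≤ Bh_2, |a_i| ≤ 2Bh_2 for i > m+1, so that Σ_{i=1}^{2m}|a_i| ≤ 4B. -/
/-!
On every cell of the partition the network is affine with slope `g'` at the midpoint of the
cell. Since `g'` is `B`-Lipschitz, `g - g_m` has one-sided derivative at most `B h / 2 ≤ B / m`
everywhere, so it is `(B / m)`-Lipschitz on `[-1, 1]`; as it vanishes at `ρ`, both parts of the
`W^{1,∞}` bound follow. The outer weights are differences of `g'` at neighbouring midpoints (the
innermost ones against `g'(ρ) = 0`), hence at most `B h` each. The half `[-1, ρ]` is reduced to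
the half `[ρ, 1]` by the reflection `z ↦ -z`.
-/

open Real Set

noncomputable section

def relu (z : ℝ) : ℝ := max z 0

open Filter Topology NNReal

theorem LipschitzOnWith.norm_derivWithin_le {𝕜 F : Type*} [NontriviallyNormedField 𝕜]
    [NormedAddCommGroup F] [NormedSpace 𝕜 F] {f : 𝕜 → F} {s : Set 𝕜} {K : ℝ≥0} {x : 𝕜}
    (hf : LipschitzOnWith K f s) (hx : x ∈ s) : ‖derivWithin f s x‖ ≤ K := by
  by_cases hacc : AccPt x (𝓟 s)
  swap
  · simp [derivWithin_zero_of_not_accPt hacc]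
  by_cases hd : DifferentiableWithinAt 𝕜 f s x
  swap
  · simp [derivWithin_zero_of_not_differentiableWithinAt hd]
  have := accPt_principal_iff_nhdsWithin.1 hacc
  refine le_of_tendsto (hasDerivWithinAt_iff_tendsto_slope.1 hd.hasDerivWithinAt).norm ?_
  filter_upwards [self_mem_nhdsWithin] with y ⟨hy, hyx⟩
  have hyx' : 0 < ‖y - x‖ := norm_pos_iff.2 (sub_ne_zero.2 hyx)
  rw [slope_def_module, norm_smul, norm_inv, inv_mul_le_iff₀ hyx', mul_comm, ← dist_eq_norm,
    ← dist_eq_norm]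
  exact hf.dist_le_mul y hy x hx

theorem LipschitzOnWith.congr {α β : Type*} [PseudoEMetricSpace α] [PseudoEMetricSpace β]
    {K : ℝ≥0} {f g : α → β} {s : Set α} (hf : LipschitzOnWith K f s) (hfg : EqOn f g s) :
    LipschitzOnWith K g s := fun x hx y hy => by
  rw [← hfg hx, ← hfg hy]; exact hf hx hy

theorem LipschitzOnWith.Icc_union_Icc {E : Type*} [PseudoMetricSpace E] {K : ℝ≥0} {f : ℝ → E}
    {a b c : ℝ} (hab : LipschitzOnWith K f (Icc a b)) (hbc : LipschitzOnWith K f (Icc b c)) :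
    LipschitzOnWith K f (Icc a c) := by
  refine LipschitzOnWith.of_dist_le_mul fun x hx y hy => ?_
  wlog hxy : x ≤ y generalizing x y
  · rw [dist_comm, dist_comm x]; exact this y hy x hx (le_of_not_ge hxy)
  rcases le_total y b with hyb | hby
  · exact hab.dist_le_mul x ⟨hx.1, hxy.trans hyb⟩ y ⟨hy.1, hyb⟩
  rcases le_total b x with hbx | hxb
  · exact hbc.dist_le_mul x ⟨hbx, hx.2⟩ y ⟨hby, hy.2⟩
  calc dist (f x) (f y) ≤ dist (f x) (f b) + dist (f b) (f y) := dist_triangle _ _ _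
    _ ≤ K * dist x b + K * dist b y :=
        add_le_add (hab.dist_le_mul x ⟨hx.1, hxb⟩ b ⟨hx.1.trans hxb, le_rfl⟩)
          (hbc.dist_le_mul b ⟨le_rfl, hby.trans hy.2⟩ y ⟨hby, hy.2⟩)
    _ = K * dist x y := by
        rw [Real.dist_eq, Real.dist_eq, Real.dist_eq, abs_of_nonpos (by linarith),
          abs_of_nonpos (by linarith), abs_of_nonpos (by linarith)]
        ring

theorem LipschitzOnWith.comp_neg {E : Type*} [PseudoEMetricSpace E] {K : ℝ≥0} {f : ℝ → E}
    {s : Set ℝ} (hf : LipschitzOnWith K f s) : LipschitzOnWith K (fun x => f (-x)) (-s) :=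
  fun x hx y hy => by simpa [edist_neg_neg] using hf hx hy

theorem lipschitzOnWith_of_forall_hasDerivWithinAt_Ici {E : Type*} [NormedAddCommGroup E]
    [NormedSpace ℝ E] {f : ℝ → E} {a b : ℝ} {K : ℝ≥0} (hf : ContinuousOn f (Icc a b))
    (hf' : ∀ x ∈ Ico a b, ∃ f', HasDerivWithinAt f f' (Ici x) x ∧ ‖f'‖ ≤ K) :
    LipschitzOnWith K f (Icc a b) := by
  choose! f' hf'_deriv hf'_le using hf'
  refine LipschitzOnWith.of_dist_le_mul fun x hx y hy => ?_
  wlog hxy : x ≤ y generalizing x y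
  · rw [dist_comm, dist_comm x]; exact this y hy x hx (le_of_not_ge hxy)
  have hsub : Ico x b ⊆ Ico a b := Ico_subset_Ico_left hx.1
  have := norm_image_sub_le_of_norm_deriv_right_le_segment (hf.mono (Icc_subset_Icc_left hx.1))
    (fun z hz => hf'_deriv z (hsub hz)) (fun z hz => hf'_le z (hsub hz)) y ⟨hxy, hy.2⟩
  rwa [dist_comm, dist_eq_norm, dist_comm, Real.dist_eq, abs_of_nonneg (sub_nonneg.2 hxy)]

theorem ContDiffOn.lipschitzOnWith_derivWithin_Icc {g : ℝ → ℝ} {a b : ℝ} {B : ℝ≥0} (hab : a < b)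
    (hg : ContDiffOn ℝ 2 g (Icc a b))
    (hg2 : ∀ z ∈ Icc a b, |derivWithin (derivWithin g (Icc a b)) (Icc a b) z| ≤ B) :
    LipschitzOnWith B (derivWithin g (Icc a b)) (Icc a b) :=
  (convex_Icc a b).lipschitzOnWith_of_nnnorm_derivWithin_le
    ((hg.derivWithin (m := 1) (uniqueDiffOn_Icc hab) le_rfl).differentiableOn one_ne_zero)
    fun z hz => by rw [← NNReal.coe_le_coe, coe_nnnorm]; exact hg2 z hz

@[fun_prop]
theorem continuous_relu : Continuous relu := continuous_id.max continuous_const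

theorem hasDerivWithinAt_relu_sub_Ici (c x : ℝ) :
    HasDerivWithinAt (fun z => relu (z - c)) (if c ≤ x then 1 else 0) (Ici x) x := by
  split_ifs with hcx
  · refine ((hasDerivWithinAt_id x _).sub_const c).congr (fun z hz => ?_) ?_
    · exact max_eq_left (by simp only [Set.mem_Ici] at hz; linarith)
    · exact max_eq_left (by linarith)
  · have : (fun z => relu (z - c)) =ᶠ[𝓝 x] fun _ => 0 := by
      filter_upwards [Iio_mem_nhds (not_le.1 hcx)] with z hz
      exact max_eq_right (by simp only [Set.mem_Iio] at hz; linarith)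
    exact ((hasDerivAt_const x (0 : ℝ)).congr_of_eventuallyEq this).hasDerivWithinAt

section Ramp

variable (ρ h : ℝ) (m : ℕ)

/-- The ramp network with knots `ρ + j * h`, `j < m`: it vanishes on `(-∞, ρ]` and has slope
`s (k + 1) - s 0` on the cell `[ρ + k * h, ρ + (k + 1) * h]`. -/
def rampNet (s : ℕ → ℝ) (z : ℝ) : ℝ :=
  ∑ j ∈ Finset.range m, (s (j + 1) - s j) * relu (z - (ρ + j * h))

/-- `midSlope ρ h φ' (k + 1)` is `φ'` at the midpoint of the cell `[ρ + k * h, ρ + (k + 1) * h]`;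
the value `0` at index `0` makes `rampNet` start with slope `0` at `ρ`. -/
def midSlope (φ' : ℝ → ℝ) : ℕ → ℝ
  | 0 => 0
  | k + 1 => φ' (ρ + (k + 1 / 2) * h)

variable {ρ h m}

theorem rampNet_of_le (hh : 0 ≤ h) (s : ℕ → ℝ) {z : ℝ} (hz : z ≤ ρ) : rampNet ρ h m s z = 0 :=
  Finset.sum_eq_zero fun j _ => by
    have := mul_nonneg (Nat.cast_nonneg (α := ℝ) j) hh
    rw [relu, max_eq_right (by linarith), mul_zero]

theorem continuous_rampNet (s : ℕ → ℝ) : Continuous (rampNet ρ h m s) := by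
  unfold rampNet; fun_prop

theorem exists_mem_Ico_cell (hh : 0 < h) {x : ℝ} (hx : x ∈ Ico ρ (ρ + m * h)) :
    ∃ k < m, x ∈ Ico (ρ + k * h) (ρ + (k + 1) * h) := by
  have hx₀ : 0 ≤ (x - ρ) / h := div_nonneg (by linarith [hx.1]) hh.le
  refine ⟨⌊(x - ρ) / h⌋₊, ?_, ?_, ?_⟩
  · rw [Nat.floor_lt hx₀, div_lt_iff₀ hh]; linarith [hx.2]
  · have := (le_div_iff₀ hh).1 (Nat.floor_le hx₀); linarith
  · have := (div_lt_iff₀ hh).1 (Nat.lt_floor_add_one ((x - ρ) / h)); linarith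

theorem add_mul_mem_Icc (hh : 0 ≤ h) {t s : ℝ} (ht : t ∈ Icc 0 s) :
    ρ + t * h ∈ Icc ρ (ρ + s * h) :=
  ⟨by nlinarith [ht.1], by nlinarith [ht.2]⟩

theorem cellMid_mem (hh : 0 ≤ h) {k : ℕ} (hk : k < m) :
    ρ + (k + 1 / 2) * h ∈ Icc ρ (ρ + m * h) := by
  have : (k : ℝ) + 1 ≤ m := by exact_mod_cast hk
  exact add_mul_mem_Icc hh ⟨by positivity, by linarith⟩

theorem hasDerivWithinAt_rampNet (hh : 0 < h) (s : ℕ → ℝ) {k : ℕ} (hk : k < m) {x : ℝ}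
    (hx : x ∈ Ico (ρ + k * h) (ρ + (k + 1) * h)) :
    HasDerivWithinAt (rampNet ρ h m s) (s (k + 1) - s 0) (Ici x) x := by
  have hknot (j : ℕ) : ρ + j * h ≤ x ↔ j < k + 1 := by
    constructor
    · intro hj
      by_contra! hkj
      have : (k : ℝ) + 1 ≤ j := by exact_mod_cast hkj
      nlinarith [hx.2]
    · intro hj
      have : (j : ℝ) ≤ k := by exact_mod_cast Nat.lt_succ_iff.1 hj
      nlinarith [hx.1]
  have hsum : HasDerivWithinAt (rampNet ρ h m s)
      (∑ j ∈ Finset.range m, (s (j + 1) - s j) * if ρ + j * h ≤ x then 1 else 0) (Ici x) x :=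
    HasDerivWithinAt.fun_sum fun j _ =>
      (hasDerivWithinAt_relu_sub_Ici (ρ + j * h) x).const_mul (s (j + 1) - s j)
  convert hsum using 1
  simp_rw [hknot, mul_ite, mul_one, mul_zero]
  rw [← Finset.sum_filter, ← Finset.sum_range_sub s (k + 1)]
  congr 1
  ext j
  simp only [Finset.mem_filter, Finset.mem_range]
  omega

theorem lipschitzOnWith_sub_rampNet {φ φ' : ℝ → ℝ} {B K : ℝ≥0} (hh : 0 < h)
    (hφ : ContinuousOn φ (Icc ρ (ρ + m * h)))
    (hφ' : ∀ x ∈ Ico ρ (ρ + m * h), HasDerivWithinAt φ (φ' x) (Ici x) x)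
    (hφ'_lip : LipschitzOnWith B φ' (Icc ρ (ρ + m * h))) (hK : B * h / 2 ≤ K) :
    LipschitzOnWith K (fun z => φ z - (φ ρ + rampNet ρ h m (midSlope ρ h φ') z))
      (Icc ρ (ρ + m * h)) := by
  refine lipschitzOnWith_of_forall_hasDerivWithinAt_Ici
    (hφ.sub (continuousOn_const.add (continuous_rampNet _).continuousOn)) fun x hx => ?_
  obtain ⟨k, hk, hxk⟩ := exists_mem_Ico_cell hh hx
  refine ⟨_, (hφ' x hx).sub ((hasDerivWithinAt_rampNet hh _ hk hxk).const_add _), ?_⟩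
  have hdist : dist x (ρ + (k + 1 / 2) * h) ≤ h / 2 := by
    rw [Real.dist_eq, abs_le]; constructor <;> linarith [hxk.1, hxk.2]
  calc ‖φ' x - (midSlope ρ h φ' (k + 1) - midSlope ρ h φ' 0)‖
      = dist (φ' x) (φ' (ρ + (k + 1 / 2) * h)) := by simp [midSlope, dist_eq_norm]
    _ ≤ B * dist x (ρ + (k + 1 / 2) * h) :=
        hφ'_lip.dist_le_mul x (Ico_subset_Icc_self hx) _ (cellMid_mem hh.le hk)
    _ ≤ K := by nlinarith [B.coe_nonneg]

theorem abs_midSlope_succ_sub_le {φ' : ℝ → ℝ} {B : ℝ≥0} (hh : 0 ≤ h)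
    (hφ'_lip : LipschitzOnWith B φ' (Icc ρ (ρ + m * h))) (hφ'ρ : φ' ρ = 0) :
    ∀ j < m, |midSlope ρ h φ' (j + 1) - midSlope ρ h φ' j| ≤ B * h := by
  have hB := B.coe_nonneg
  rintro (_ | j) hj
  · have hρ : ρ ∈ Icc ρ (ρ + m * h) := ⟨le_rfl, by nlinarith [Nat.cast_nonneg (α := ℝ) m]⟩
    have := hφ'_lip.dist_le_mul _ (cellMid_mem hh hj) ρ hρ
    rw [Real.dist_eq, Real.dist_eq, hφ'ρ] at this
    simp only [midSlope, Nat.cast_zero, sub_zero] at this ⊢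
    rw [show ρ + (0 + 1 / 2) * h - ρ = h / 2 by ring, abs_of_nonneg (a := h / 2) (by linarith)]
      at this
    nlinarith
  · have := hφ'_lip.dist_le_mul _ (cellMid_mem hh hj) _ (cellMid_mem hh (Nat.lt_of_succ_lt hj))
    rw [Real.dist_eq, Real.dist_eq] at this
    simp only [midSlope, Nat.cast_add, Nat.cast_one] at this ⊢
    convert this using 2
    rw [abs_of_nonneg (by linarith)]; ring

end Ramp

theorem lipschitzOnWith_sub_rampNet_add_rampNet {φ φ' : ℝ → ℝ} {B K : ℝ≥0} {a b ρ h₁ h₂ : ℝ}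
    {m : ℕ} (h₁_pos : 0 < h₁) (h₂_pos : 0 < h₂) (ha : ρ - m * h₁ = a) (hb : ρ + m * h₂ = b)
    (hφ : ∀ x ∈ Icc a b, HasDerivWithinAt φ (φ' x) (Icc a b) x)
    (hφ'_lip : LipschitzOnWith B φ' (Icc a b)) (hK₁ : B * h₁ / 2 ≤ K) (hK₂ : B * h₂ / 2 ≤ K) :
    LipschitzOnWith K (fun z => φ z - (φ ρ +
        (rampNet (-ρ) h₁ m (midSlope (-ρ) h₁ fun w => -φ' (-w)) (-z) +
          rampNet ρ h₂ m (midSlope ρ h₂ φ') z))) (Icc a b) := by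
  subst ha hb
  have hm := Nat.cast_nonneg (α := ℝ) m
  have hφc : ContinuousOn φ (Icc (ρ - m * h₁) (ρ + m * h₂)) := fun x hx =>
    (hφ x hx).continuousWithinAt
  have hright : LipschitzOnWith K (fun z => φ z - (φ ρ + rampNet ρ h₂ m (midSlope ρ h₂ φ') z))
      (Icc ρ (ρ + m * h₂)) := by
    have hsub : Icc ρ (ρ + m * h₂) ⊆ Icc (ρ - m * h₁) (ρ + m * h₂) :=
      Icc_subset_Icc_left (by nlinarith)
    refine lipschitzOnWith_sub_rampNet h₂_pos (hφc.mono hsub) (fun x hx => ?_)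
      (hφ'_lip.mono hsub) hK₂
    exact (hφ x (hsub (Ico_subset_Icc_self hx))).mono_of_mem_nhdsWithin
      (mem_of_superset (Icc_mem_nhdsGE hx.2) (Icc_subset_Icc_left (by nlinarith [hx.1])))
  have hleft : LipschitzOnWith K
      (fun w => φ (-w) - (φ (-(-ρ)) + rampNet (-ρ) h₁ m (midSlope (-ρ) h₁ fun w => -φ' (-w)) w))
      (Icc (-ρ) (-ρ + m * h₁)) := by
    have hsub : Icc (-ρ) (-ρ + m * h₁) ⊆ -Icc (ρ - m * h₁) (ρ + m * h₂) := by
      rw [Set.neg_Icc]; exact Icc_subset_Icc (by nlinarith) (by linarith)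
    refine lipschitzOnWith_sub_rampNet h₁_pos
      (hφc.comp continuousOn_neg fun w hw => Set.mem_neg.1 (hsub hw)) (fun w hw => ?_)
      ((hφ'_lip.comp_neg.neg).mono hsub) hK₁
    have hw' := Set.mem_neg.1 (hsub (Ico_subset_Icc_self hw))
    have hφw : HasDerivWithinAt φ (φ' (-w)) (Iic (-w)) (-w) :=
      (hφ (-w) hw').mono_of_mem_nhdsWithin (mem_of_superset
        (Icc_mem_nhdsLE (by linarith [hw.2])) (Icc_subset_Icc_right hw'.2))
    simpa [Function.comp_def] using
      hφw.scomp w (hasDerivWithinAt_neg w (Ici w)) fun y hy => neg_le_neg (Set.mem_Ici.1 hy)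
  have hneg : -Icc (-ρ) (-ρ + m * h₁) = Icc (ρ - m * h₁) ρ := by
    rw [Set.neg_Icc, neg_neg, neg_add, neg_neg, ← sub_eq_add_neg]
  refine (hneg ▸ hleft.comp_neg.congr fun z hz => ?_).Icc_union_Icc
    (hright.congr fun z hz => ?_)
  · rw [hneg] at hz
    simp [rampNet_of_le h₂_pos.le _ hz.2]
  · simp [rampNet_of_le h₁_pos.le _ (neg_le_neg hz.1)]

theorem Fin.sum_two_mul_ite {M : Type*} [AddCommMonoid M] (m : ℕ) (f g : ℕ → M) :
    ∑ i : Fin (2 * m), (if (i : ℕ) < m then f (m - 1 - i) else g (i - m)) =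
      ∑ j ∈ Finset.range m, f j + ∑ j ∈ Finset.range m, g j := by
  rw [Fin.sum_univ_eq_sum_range (fun i => if i < m then f (m - 1 - i) else g (i - m)),
    two_mul, Finset.sum_range_add, ← Finset.sum_range_reflect f m]
  congr 1
  · exact Finset.sum_congr rfl fun i hi => if_pos (Finset.mem_range.1 hi)
  · simp

section Network

variable (ρ h₁ h₂ : ℝ) (sL sR : ℕ → ℝ) (m : ℕ)

/-- Neuron `i < m` is the reflected ramp at the knot `ρ - (m - 1 - i) * h₁` and neuron `m + j`
the ramp at `ρ + j * h₂`, so that the knots are numbered from left to right as in the paper. -/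
def netCoeff (i : Fin (2 * m)) : ℝ :=
  if (i : ℕ) < m then sL (m - 1 - i + 1) - sL (m - 1 - i) else sR (i - m + 1) - sR (i - m)

def netBias (i : Fin (2 * m)) : ℝ :=
  if (i : ℕ) < m then -ρ + (m - 1 - i : ℕ) * h₁ else ρ + (i - m : ℕ) * h₂

def netSign (i : Fin (2 * m)) : ℝ :=
  if (i : ℕ) < m then -1 else 1

theorem sum_netCoeff_mul_relu (z : ℝ) :
    ∑ i, netCoeff sL sR m i * relu (netSign m i * z - netBias ρ h₁ h₂ m i) =
      rampNet (-ρ) h₁ m sL (-z) + rampNet ρ h₂ m sR z := by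
  rw [rampNet, rampNet, ← Fin.sum_two_mul_ite]
  refine Finset.sum_congr rfl fun i _ => ?_
  split_ifs with hi
  · simp only [netCoeff, netBias, netSign, if_pos hi, neg_one_mul]
  · simp only [netCoeff, netBias, netSign, if_neg hi, one_mul]

theorem netSign_eq_one_or_neg_one (i : Fin (2 * m)) : netSign m i = 1 ∨ netSign m i = -1 := by
  unfold netSign; split_ifs <;> simp

variable {ρ h₁ h₂ sL sR m}

theorem netBias_mem {s : Set ℝ} (h₁_nonneg : 0 ≤ h₁) (h₂_nonneg : 0 ≤ h₂)
    (hs₁ : Icc (-ρ) (-ρ + m * h₁) ⊆ s) (hs₂ : Icc ρ (ρ + m * h₂) ⊆ s) (i : Fin (2 * m)) :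
    netBias ρ h₁ h₂ m i ∈ s := by
  unfold netBias
  split_ifs with hi
  · exact hs₁ (add_mul_mem_Icc h₁_nonneg ⟨by positivity, Nat.cast_le.2 (by omega)⟩)
  · exact hs₂ (add_mul_mem_Icc h₂_nonneg ⟨by positivity, Nat.cast_le.2 (by have := i.isLt; omega)⟩)

theorem abs_netCoeff_le {CL CR : ℝ} (hL : ∀ j < m, |sL (j + 1) - sL j| ≤ CL)
    (hR : ∀ j < m, |sR (j + 1) - sR j| ≤ CR) (i : Fin (2 * m)) :
    |netCoeff sL sR m i| ≤ if (i : ℕ) < m then CL else CR := by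
  unfold netCoeff
  split_ifs with hi
  · exact hL _ (by omega)
  · exact hR _ (by have := i.isLt; omega)

theorem sum_abs_netCoeff_le {CL CR : ℝ}
    (h : ∀ i, |netCoeff sL sR m i| ≤ if (i : ℕ) < m then CL else CR) :
    ∑ i, |netCoeff sL sR m i| ≤ m * CL + m * CR :=
  (Finset.sum_le_sum fun i _ => h i).trans_eq <|
    (Fin.sum_two_mul_ite m (fun _ => CL) (fun _ => CR)).trans (by simp)

theorem sum_netCoeff_mul_relu_self (h₁_nonneg : 0 ≤ h₁) (h₂_nonneg : 0 ≤ h₂) :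
    ∑ i, netCoeff sL sR m i * relu (netSign m i * ρ - netBias ρ h₁ h₂ m i) = 0 := by
  rw [sum_netCoeff_mul_relu, rampNet_of_le h₁_nonneg _ le_rfl, rampNet_of_le h₂_nonneg _ le_rfl,
    add_zero]

end Network

theorem abs_netCoeff_midSlope_le {φ' : ℝ → ℝ} {B : ℝ≥0} {a b ρ h₁ h₂ : ℝ} {m : ℕ}
    (h₁_nonneg : 0 ≤ h₁) (h₂_nonneg : 0 ≤ h₂) (ha : ρ - m * h₁ = a) (hb : ρ + m * h₂ = b)
    (hφ'_lip : LipschitzOnWith B φ' (Icc a b)) (hφ'ρ : φ' ρ = 0) (i : Fin (2 * m)) :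
    |netCoeff (midSlope (-ρ) h₁ fun w => -φ' (-w)) (midSlope ρ h₂ φ') m i| ≤
      if (i : ℕ) < m then B * h₁ else B * h₂ := by
  subst ha hb
  have hm := Nat.cast_nonneg (α := ℝ) m
  refine abs_netCoeff_le (abs_midSlope_succ_sub_le h₁_nonneg ?_ (by simp [hφ'ρ]))
    (abs_midSlope_succ_sub_le h₂_nonneg (hφ'_lip.mono (Icc_subset_Icc_left (by nlinarith))) hφ'ρ) i
  refine hφ'_lip.comp_neg.neg.mono ?_
  rw [Set.neg_Icc]; exact Icc_subset_Icc (by nlinarith) (by linarith)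

theorem LipschitzOnWith.abs_le_of_apply_eq_zero {f : ℝ → ℝ} {K : ℝ≥0} {s : Set ℝ} {ρ z : ℝ}
    (hf : LipschitzOnWith K f s) (hρ : ρ ∈ s) (hz : z ∈ s) (hfρ : f ρ = 0) :
    |f z| ≤ K * |z - ρ| := by
  simpa [hfρ, Real.dist_eq] using hf.dist_le_mul z hz ρ hρ

theorem statement18_general
    (B ρ : ℝ) (hB : 0 < B) (hρ : ρ ∈ Set.Icc (0 : ℝ) (1 / 2))
    (g : ℝ → ℝ) (hg : ContDiffOn ℝ 2 g (Set.Icc (-1) 1))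
    (hg0 : ∀ z ∈ Set.Icc (-1 : ℝ) 1, |g z| ≤ B)
    (hg2 : ∀ z ∈ Set.Icc (-1 : ℝ) 1,
      |derivWithin (derivWithin g (Set.Icc (-1) 1)) (Set.Icc (-1) 1) z| ≤ B)
    (hρ' : derivWithin g (Set.Icc (-1) 1) ρ = 0)
    (m : ℕ) (hm : 1 ≤ m) :
    ∃ (a b ε : Fin (2 * m) → ℝ),
      (∀ i, b i ∈ Set.Icc (-1 : ℝ) 1) ∧
      (∀ i, ε i = 1 ∨ ε i = -1) ∧
      -- `‖g - g_m‖_{L^∞([-1,1])} ≤ 2B/m`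
      (∀ z ∈ Set.Icc (-1 : ℝ) 1,
        |g z - (g ρ + ∑ i, a i * relu (ε i * z - b i))| ≤ 2 * B / m) ∧
      -- `‖g' - g_m'‖_{L^∞([-1,1])} ≤ 2B/m` (wherever the derivative exists)
      (∀ z ∈ Set.Icc (-1 : ℝ) 1,
        DifferentiableWithinAt ℝ
            (fun t => g t - (g ρ + ∑ i, a i * relu (ε i * t - b i)))
            (Set.Icc (-1) 1) z →
          |derivWithin
              (fun t => g t - (g ρ + ∑ i, a i * relu (ε i * t - b i)))
              (Set.Icc (-1) 1) z| ≤ 2 * B / m) ∧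
      |g ρ| ≤ B ∧
      (∀ i : Fin (2 * m),
        ((i : ℕ) + 1 < m → |a i| ≤ 2 * B * ((ρ + 1) / m)) ∧
        ((i : ℕ) + 1 = m → |a i| ≤ B * ((ρ + 1) / m)) ∧
        ((i : ℕ) + 1 = m + 1 → |a i| ≤ B * ((1 - ρ) / m)) ∧
        (m + 1 < (i : ℕ) + 1 → |a i| ≤ 2 * B * ((1 - ρ) / m))) ∧
      (∑ i, |a i|) ≤ 4 * B := by
  obtain ⟨hρ₀, hρ₁⟩ := hρ
  have hm₀ : (0 : ℝ) < m := by exact_mod_cast hm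
  set h₁ := (ρ + 1) / m
  set h₂ := (1 - ρ) / m
  have h₁_pos : 0 < h₁ := div_pos (by linarith) hm₀
  have h₂_pos : 0 < h₂ := div_pos (by linarith) hm₀
  have hmh₁ : ρ - m * h₁ = -1 := by simp only [h₁]; field_simp; ring
  have hmh₂ : ρ + m * h₂ = 1 := by simp only [h₂]; field_simp; ring
  have hK {h : ℝ} (hh : m * h ≤ 2) : B * h / 2 ≤ B / m := by rw [le_div_iff₀ hm₀]; nlinarith
  have hρI : ρ ∈ Icc (-1 : ℝ) 1 := ⟨by linarith, by linarith⟩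
  set g' := derivWithin g (Icc (-1 : ℝ) 1)
  set sL := midSlope (-ρ) h₁ fun w => -g' (-w)
  set sR := midSlope ρ h₂ g'
  have hg'_lip : LipschitzOnWith ⟨B, hB.le⟩ g' (Icc (-1) 1) :=
    hg.lipschitzOnWith_derivWithin_Icc (by norm_num) hg2
  have hc (i : Fin (2 * m)) : |netCoeff sL sR m i| ≤ if (i : ℕ) < m then B * h₁ else B * h₂ :=
    abs_netCoeff_midSlope_le h₁_pos.le h₂_pos.le hmh₁ hmh₂ hg'_lip hρ' i
  have hlip : LipschitzOnWith ⟨B / m, by positivity⟩ (fun z => g z - (g ρ +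
      ∑ i, netCoeff sL sR m i * relu (netSign m i * z - netBias ρ h₁ h₂ m i))) (Icc (-1) 1) := by
    simp_rw [sum_netCoeff_mul_relu]
    exact lipschitzOnWith_sub_rampNet_add_rampNet h₁_pos h₂_pos hmh₁ hmh₂
      (fun x hx => ((hg.differentiableOn two_ne_zero) x hx).hasDerivWithinAt) hg'_lip
      (hK (by linarith)) (hK (by linarith))
  refine ⟨netCoeff sL sR m, netBias ρ h₁ h₂ m, netSign m,
    netBias_mem h₁_pos.le h₂_pos.le (Icc_subset_Icc (by linarith) (by linarith))
      (Icc_subset_Icc (by linarith) hmh₂.le), netSign_eq_one_or_neg_one m,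
    fun z hz => ?_, fun z hz _ => ?_, hg0 ρ hρI, fun i => ?_, ?_⟩
  · refine (hlip.abs_le_of_apply_eq_zero hρI hz
      (by simp [sum_netCoeff_mul_relu_self h₁_pos.le h₂_pos.le])).trans ?_
    show B / m * |z - ρ| ≤ 2 * B / m
    rw [mul_div_assoc, mul_comm 2]
    exact mul_le_mul_of_nonneg_left (abs_sub_le_iff.2 ⟨by linarith [hz.2], by linarith [hz.1]⟩)
      (div_pos hB hm₀).le
  · refine (hlip.norm_derivWithin_le hz).trans ?_
    show B / m ≤ 2 * B / m
    rw [mul_div_assoc]; linarith [div_pos hB hm₀]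
  · have hB₁ := mul_pos hB h₁_pos
    have hB₂ := mul_pos hB h₂_pos
    have hci := hc i
    split_ifs at hci
    · exact ⟨fun _ => by linarith, fun _ => hci, fun _ => by omega, fun _ => by omega⟩
    · exact ⟨fun _ => by omega, fun _ => by omega, fun _ => hci, fun _ => by linarith⟩
  · have : (m : ℝ) * (B * h₁) + m * (B * h₂) = 2 * B := by
      linear_combination B * hmh₂ - B * hmh₁
    linarith [sum_abs_netCoeff_le hc]

/-- Lemma 4.5, piecewise-linear/ReLU approximation: let
`g ∈ C²([-1,1])` with `‖g^{(r)}‖_∞ ≤ B` for `r = 0,1,2` and `g'(ρ) = 0` for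
some `ρ ∈ [0, 1/2]`.  With the partition of `[-1,1]` having mesh
`h₁ = (ρ+1)/m` on `[-1,ρ]` and `h₂ = (1-ρ)/m` on `[ρ,1]`, there exists a
two-layer ReLU network `g_m(z) = c + Σ_{i=1}^{2m} aᵢ ReLU(εᵢ z - bᵢ)` with
`c = g(ρ)`, `bᵢ ∈ [-1,1]`, `εᵢ ∈ {±1}`, such that
`‖g - g_m‖_{W^{1,∞}([-1,1])} ≤ 2B/m`; moreover `|c| ≤ B`, `|aᵢ| ≤ 2Bh₁` for
`i < m`, `|a_m| ≤ Bh₁`, `|a_{m+1}| ≤ Bh₂`, `|aᵢ| ≤ 2Bh₂` for `i > m+1`, and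
`Σᵢ |aᵢ| ≤ 4B`.  (Indices are `1`-based as in the paper: the `1`-based index of
`i : Fin (2m)` is `i + 1`.) -/
theorem statement18
    (B ρ : ℝ) (hB : 0 < B) (hρ : ρ ∈ Set.Icc (0 : ℝ) (1 / 2))
    (g : ℝ → ℝ) (hg : ContDiffOn ℝ 2 g (Set.Icc (-1) 1))
    (hg0 : ∀ z ∈ Set.Icc (-1 : ℝ) 1, |g z| ≤ B)
    (hg1 : ∀ z ∈ Set.Icc (-1 : ℝ) 1, |derivWithin g (Set.Icc (-1) 1) z| ≤ B)
    (hg2 : ∀ z ∈ Set.Icc (-1 : ℝ) 1,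
      |derivWithin (derivWithin g (Set.Icc (-1) 1)) (Set.Icc (-1) 1) z| ≤ B)
    (hρ' : derivWithin g (Set.Icc (-1) 1) ρ = 0)
    (m : ℕ) (hm : 1 ≤ m) :
    ∃ (a b ε : Fin (2 * m) → ℝ),
      (∀ i, b i ∈ Set.Icc (-1 : ℝ) 1) ∧
      (∀ i, ε i = 1 ∨ ε i = -1) ∧
      -- `‖g - g_m‖_{L^∞([-1,1])} ≤ 2B/m`
      (∀ z ∈ Set.Icc (-1 : ℝ) 1,
        |g z - (g ρ + ∑ i, a i * relu (ε i * z - b i))| ≤ 2 * B / m) ∧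
      -- `‖g' - g_m'‖_{L^∞([-1,1])} ≤ 2B/m` (wherever the derivative exists)
      (∀ z ∈ Set.Icc (-1 : ℝ) 1,
        DifferentiableWithinAt ℝ
            (fun t => g t - (g ρ + ∑ i, a i * relu (ε i * t - b i)))
            (Set.Icc (-1) 1) z →
          |derivWithin
              (fun t => g t - (g ρ + ∑ i, a i * relu (ε i * t - b i)))
              (Set.Icc (-1) 1) z| ≤ 2 * B / m) ∧
      |g ρ| ≤ B ∧
      (∀ i : Fin (2 * m),
        ((i : ℕ) + 1 < m → |a i| ≤ 2 * B * ((ρ + 1) / m)) ∧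
        ((i : ℕ) + 1 = m → |a i| ≤ B * ((ρ + 1) / m)) ∧
        ((i : ℕ) + 1 = m + 1 → |a i| ≤ B * ((1 - ρ) / m)) ∧
        (m + 1 < (i : ℕ) + 1 → |a i| ≤ 2 * B * ((1 - ρ) / m))) ∧
      (∑ i, |a i|) ≤ 4 * B :=
  statement18_general B ρ hB hρ g hg hg0 hg2 hρ' m hm
end
end
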